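/- Interpolation for mixed weak norms: suppose 0 < θ < 1 and p⃗ = (p1,p2), q⃗ = (q1,q2), r⃗ = (r1,r2) with 0 < p_i, q_i, r_i < ∞ satisfy 1/r_i = θ/p_i + (1−θ)/q_i for i = 1, 2. Then for every measurable function f on ℝ^n × ℝ^m, ‖f‖_{L^{r⃗,∞}} ≤ ‖f‖_{L^{p⃗,∞}}^θ · ‖f‖_{L^{q⃗,∞}}^{1−θ}. -/

import Mathlib

open MeasureTheory ENNReal Filter Topology Set

noncomputable section

/-- `ℝ^n` with the Euclidean norm and Lebesgue measure. -/
abbrev Euc (n : ℕ) : Type := EuclideanSpace ℝ (Fin n)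

/-- The weak `L^q` quasi-norm `sup_{λ>0} λ·μ{x : |h x| > λ}^{1/q}`. -/
def weakNorm {α : Type*} [MeasurableSpace α] (μ : Measure α) (q : ℝ) (h : α → ℝ) : ℝ≥0∞ :=
  ⨆ (l : ℝ) (_ : 0 < l), ENNReal.ofReal l * μ {x | l < |h x|} ^ (1 / q)

/-- The strong `L^q` norm `(∫ |h|^q)^{1/q}`. -/
def strongNorm {α : Type*} [MeasurableSpace α] (μ : Measure α) (q : ℝ) (h : α → ℝ) : ℝ≥0∞ :=
  (∫⁻ x, ENNReal.ofReal |h x| ^ q ∂μ) ^ (1 / q)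

/-- The mixed norm `‖f‖_{L^{(p1,p2)}}` on `ℝ^n × ℝ^m` (inner exponent `p1` in `x`,
outer exponent `p2` in `y`). -/
def mixedNorm {n m : ℕ} (p1 p2 : ℝ) (f : Euc n × Euc m → ℝ) : ℝ≥0∞ :=
  (∫⁻ y : Euc m, (∫⁻ x : Euc n, ENNReal.ofReal |f (x, y)| ^ p1) ^ (p2 / p1)) ^ (1 / p2)

/-- The mixed weak norm `‖f‖_{L^{(p1,p2),∞}} = sup_{λ>0} λ·‖χ_{{|f|>λ}}‖_{L^{(p1,p2)}}`. -/
def mixedWeakNorm {n m : ℕ} (p1 p2 : ℝ) (f : Euc n × Euc m → ℝ) : ℝ≥0∞ :=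
  ⨆ (l : ℝ) (_ : 0 < l), ENNReal.ofReal l *
    mixedNorm p1 p2 ({z | l < |f z|}.indicator fun _ => (1 : ℝ))

/-- The iterated weak norm `‖f‖_{L^{p2,∞}(L^{p1,∞})}`: the weak `L^{p2}` quasi-norm in `y`
of the weak `L^{p1}` quasi-norm in `x`. -/
def iteratedWeakNorm {n m : ℕ} (p1 p2 : ℝ) (f : Euc n × Euc m → ℝ) : ℝ≥0∞ :=
  ⨆ (l : ℝ) (_ : 0 < l), ENNReal.ofReal l *
    volume {y : Euc m | ENNReal.ofReal l < weakNorm volume p1 fun x => f (x, y)} ^ (1 / p2)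

/-- The mixed weak norm for `[0,∞]`-valued functions. -/
def mixedWeakNormE {n m : ℕ} (p1 p2 : ℝ) (f : Euc n × Euc m → ℝ≥0∞) : ℝ≥0∞ :=
  ⨆ (l : ℝ) (_ : 0 < l), ENNReal.ofReal l *
    mixedNorm p1 p2 ({z | ENNReal.ofReal l < f z}.indicator fun _ => (1 : ℝ))


private lemma mixedNorm_indicator {n m : ℕ} {a b : ℝ} (ha : 0 < a)
    (S : Set (Euc n × Euc m)) (hS : MeasurableSet S) :
    mixedNorm a b (S.indicator fun _ => (1 : ℝ)) =
      (∫⁻ y : Euc m, (volume ((fun x => (x, y)) ⁻¹' S)) ^ (b / a)) ^ (1 / b) := by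
  unfold mixedNorm
  congr 1
  refine lintegral_congr fun y => ?_
  congr 1
  have hpt : (fun x : Euc n => ENNReal.ofReal |S.indicator (fun _ => (1 : ℝ)) (x, y)| ^ a)
      = ((fun x => (x, y)) ⁻¹' S).indicator (1 : Euc n → ℝ≥0∞) := by
    ext x
    by_cases h : (x, y) ∈ S <;>
      simp [Set.indicator_apply, Set.mem_preimage, h, ENNReal.zero_rpow_of_pos ha]
  rw [hpt]
  exact lintegral_indicator_one (hS.preimage measurable_prodMk_right)

private lemma key_ineq {α : Type*} [MeasurableSpace α] (μ : Measure α)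
    (θ p1 p2 q1 q2 r1 r2 : ℝ) (hθ0 : 0 < θ) (hθ1 : θ < 1)
    (hp1 : 0 < p1) (hp2 : 0 < p2) (hq1 : 0 < q1) (hq2 : 0 < q2)
    (hr1 : 0 < r1) (hr2 : 0 < r2)
    (h1 : 1 / r1 = θ / p1 + (1 - θ) / q1) (h2 : 1 / r2 = θ / p2 + (1 - θ) / q2)
    (A : α → ℝ≥0∞) (hA : Measurable A) :
    (∫⁻ y, A y ^ (r2 / r1) ∂μ) ^ (1 / r2) ≤
      ((∫⁻ y, A y ^ (p2 / p1) ∂μ) ^ (1 / p2)) ^ θ *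
      ((∫⁻ y, A y ^ (q2 / q1) ∂μ) ^ (1 / q2)) ^ (1 - θ) := by
  have hθ1' : 0 < 1 - θ := by linarith
  set s : ℝ := θ * r2 / p2 with hs_def
  set t : ℝ := (1 - θ) * r2 / q2 with ht_def
  have hs : 0 < s := by positivity
  have ht : 0 < t := by positivity
  have hst : s + t = 1 := by
    rw [hs_def, ht_def]
    field_simp at h2 ⊢
    nlinarith [h2]
  have hc : r2 / r1 = p2 / p1 * s + q2 / q1 * t := by
    rw [hs_def, ht_def]
    field_simp at h1 ⊢
    linear_combination h1
  have hconj : Real.HolderConjugate (1 / s) (1 / t) := by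
    rw [Real.holderConjugate_iff]
    constructor
    · rw [lt_div_iff₀ hs]; linarith
    · simp only [one_div, inv_inv]; exact hst
  have holder := ENNReal.lintegral_mul_le_Lp_mul_Lq μ hconj
    ((hA.pow_const (p2 / p1 * s)).aemeasurable)
    ((hA.pow_const (q2 / q1 * t)).aemeasurable)
  have e1 : ∀ y, (A y ^ (p2 / p1 * s)) ^ (1 / s) = A y ^ (p2 / p1) := fun y => by
    rw [← ENNReal.rpow_mul]
    congr 1
    field_simp
  have e2 : ∀ y, (A y ^ (q2 / q1 * t)) ^ (1 / t) = A y ^ (q2 / q1) := fun y => by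
    rw [← ENNReal.rpow_mul]
    congr 1
    field_simp
  have e3 : ∀ y, A y ^ (r2 / r1) = A y ^ (p2 / p1 * s) * A y ^ (q2 / q1 * t) := fun y => by
    rw [hc, ENNReal.rpow_add_of_nonneg _ _ (by positivity) (by positivity)]
  have hmain : ∫⁻ y, A y ^ (r2 / r1) ∂μ ≤
      (∫⁻ y, A y ^ (p2 / p1) ∂μ) ^ s * (∫⁻ y, A y ^ (q2 / q1) ∂μ) ^ t := by
    calc ∫⁻ y, A y ^ (r2 / r1) ∂μ
        = ∫⁻ y, (fun z => A z ^ (p2 / p1 * s)) y * (fun z => A z ^ (q2 / q1 * t)) y ∂μ :=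
          lintegral_congr fun y => e3 y
      _ ≤ (∫⁻ y, (A y ^ (p2 / p1 * s)) ^ (1 / s) ∂μ) ^ (1 / (1 / s)) *
          (∫⁻ y, (A y ^ (q2 / q1 * t)) ^ (1 / t) ∂μ) ^ (1 / (1 / t)) := holder
      _ = (∫⁻ y, A y ^ (p2 / p1) ∂μ) ^ s * (∫⁻ y, A y ^ (q2 / q1) ∂μ) ^ t := by
          rw [one_div_one_div, one_div_one_div]
          congr 1
          · congr 1; exact lintegral_congr e1
          · congr 1; exact lintegral_congr e2
  calc (∫⁻ y, A y ^ (r2 / r1) ∂μ) ^ (1 / r2)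
      ≤ ((∫⁻ y, A y ^ (p2 / p1) ∂μ) ^ s * (∫⁻ y, A y ^ (q2 / q1) ∂μ) ^ t) ^ (1 / r2) :=
        ENNReal.rpow_le_rpow hmain (by positivity)
    _ = ((∫⁻ y, A y ^ (p2 / p1) ∂μ) ^ (1 / p2)) ^ θ *
        ((∫⁻ y, A y ^ (q2 / q1) ∂μ) ^ (1 / q2)) ^ (1 - θ) := by
        rw [ENNReal.mul_rpow_of_nonneg _ _ (by positivity),
          ← ENNReal.rpow_mul, ← ENNReal.rpow_mul, ← ENNReal.rpow_mul, ← ENNReal.rpow_mul]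
        congr 2
        · rw [hs_def]; field_simp
        · rw [ht_def]; field_simp

/-- Interpolation for mixed weak norms: if `0 < θ < 1` and
`1/rᵢ = θ/pᵢ + (1−θ)/qᵢ` (`i = 1, 2`) with all exponents in `(0,∞)`, then for every
measurable `f` on `ℝ^n × ℝ^m`,
`‖f‖_{L^{(r1,r2),∞}} ≤ ‖f‖_{L^{(p1,p2),∞}}^θ · ‖f‖_{L^{(q1,q2),∞}}^{1−θ}`. -/
theorem stmt15 (n m : ℕ) (θ p1 p2 q1 q2 r1 r2 : ℝ) (hθ0 : 0 < θ) (hθ1 : θ < 1)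
    (hp1 : 0 < p1) (hp2 : 0 < p2) (hq1 : 0 < q1) (hq2 : 0 < q2)
    (hr1 : 0 < r1) (hr2 : 0 < r2)
    (h1 : 1 / r1 = θ / p1 + (1 - θ) / q1) (h2 : 1 / r2 = θ / p2 + (1 - θ) / q2)
    (f : Euc n × Euc m → ℝ) (hf : Measurable f) :
    mixedWeakNorm r1 r2 f ≤
      mixedWeakNorm p1 p2 f ^ θ * mixedWeakNorm q1 q2 f ^ (1 - θ) := by
  have hθ1' : 0 < 1 - θ := by linarith
  rw [mixedWeakNorm]
  refine iSup₂_le fun l hl => ?_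
  set S : Set (Euc n × Euc m) := {z | l < |f z|} with hS_def
  have hS : MeasurableSet S := measurableSet_lt measurable_const hf.abs
  set A : Euc m → ℝ≥0∞ := fun y => volume ((fun x => (x, y)) ⁻¹' S) with hA_def
  have hAm : Measurable A := measurable_measure_prodMk_right hS
  have key := key_ineq volume θ p1 p2 q1 q2 r1 r2 hθ0 hθ1 hp1 hp2 hq1 hq2 hr1 hr2 h1 h2 A hAm
  have hl0 : (ENNReal.ofReal l) ≠ 0 := by simp [hl, ENNReal.ofReal_pos]
  have hlt : (ENNReal.ofReal l) ≠ ⊤ := ENNReal.ofReal_ne_top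
  have hlsplit : ENNReal.ofReal l = (ENNReal.ofReal l) ^ θ * (ENNReal.ofReal l) ^ (1 - θ) := by
    rw [← ENNReal.rpow_add _ _ hl0 hlt]
    norm_num
  have hp_le : ENNReal.ofReal l * mixedNorm p1 p2 (S.indicator fun _ => (1 : ℝ)) ≤
      mixedWeakNorm p1 p2 f := by
    rw [mixedWeakNorm]
    exact le_iSup₂ (f := fun (l' : ℝ) (_ : 0 < l') => ENNReal.ofReal l' *
      mixedNorm p1 p2 ({z | l' < |f z|}.indicator fun _ => (1 : ℝ))) l hl
  have hq_le : ENNReal.ofReal l * mixedNorm q1 q2 (S.indicator fun _ => (1 : ℝ)) ≤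
      mixedWeakNorm q1 q2 f := by
    rw [mixedWeakNorm]
    exact le_iSup₂ (f := fun (l' : ℝ) (_ : 0 < l') => ENNReal.ofReal l' *
      mixedNorm q1 q2 ({z | l' < |f z|}.indicator fun _ => (1 : ℝ))) l hl
  calc ENNReal.ofReal l * mixedNorm r1 r2 (S.indicator fun _ => (1 : ℝ))
      = ENNReal.ofReal l * (∫⁻ y : Euc m, A y ^ (r2 / r1)) ^ (1 / r2) := by
        rw [mixedNorm_indicator hr1 S hS]
    _ ≤ ENNReal.ofReal l * (((∫⁻ y : Euc m, A y ^ (p2 / p1)) ^ (1 / p2)) ^ θ *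
        ((∫⁻ y : Euc m, A y ^ (q2 / q1)) ^ (1 / q2)) ^ (1 - θ)) := mul_le_mul_right key _
    _ = (ENNReal.ofReal l * (∫⁻ y : Euc m, A y ^ (p2 / p1)) ^ (1 / p2)) ^ θ *
        (ENNReal.ofReal l * (∫⁻ y : Euc m, A y ^ (q2 / q1)) ^ (1 / q2)) ^ (1 - θ) := by
        rw [ENNReal.mul_rpow_of_nonneg _ _ (le_of_lt hθ0),
          ENNReal.mul_rpow_of_nonneg _ _ (le_of_lt hθ1')]
        conv_lhs => rw [hlsplit]
        ring
    _ = (ENNReal.ofReal l * mixedNorm p1 p2 (S.indicator fun _ => (1 : ℝ))) ^ θ *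
        (ENNReal.ofReal l * mixedNorm q1 q2 (S.indicator fun _ => (1 : ℝ))) ^ (1 - θ) := by
        rw [mixedNorm_indicator hp1 S hS, mixedNorm_indicator hq1 S hS]
    _ ≤ mixedWeakNorm p1 p2 f ^ θ * mixedWeakNorm q1 q2 f ^ (1 - θ) :=
        mul_le_mul' (ENNReal.rpow_le_rpow hp_le (le_of_lt hθ0))
          (ENNReal.rpow_le_rpow hq_le (le_of_lt hθ1'))
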